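/- arXiv:2505.24271 — 3 statements merged into one kernel-verified Lean document; each statement's English description precedes it below -/
import Mathlib

section
/- Let α, β ∈ ℝ satisfy α ≥ β ≥ 0 and α + β > 1, and let ε > 0. Set λ = max(1 − α, 0) if α ≠ 1 and λ = ε if α = 1. Then there exists a constant C > 0 (depending only on α, β, ε) such that for every a ∈ ℝ, ∑_{n ∈ ℤ} 1 / (⟨n⟩^α ⟨n − a⟩^β) ≤ C ⟨a⟩^{−(β − λ)}. -/
/-
Write `A = ⟨a⟩`. Since `⟨a⟩ ≤ ⟨n⟩ + ⟨n - a⟩`, at every lattice point one of the two factors has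
size at least `A / 2`, and can be traded for `2^γ A^{-γ}`. For `α > 1` this gives
`⟨n⟩^{-α} ⟨n-a⟩^{-β} ≲ A^{-β} (⟨n⟩^{-α} + ⟨n-a⟩^{-α})`, whose sum is `≲ A^{-β}`. For `α < 1` one
splits according to whether `⟨n⟩` and `⟨n - a⟩` are below or above `A`, and uses that, uniformly
in the centre `b`, the lattice sums of `⟨n - b⟩^{-s}` over `⟨n - b⟩ ≤ M` are `≲ M^{1-s}` (`s < 1`)
and those of `⟨n - b⟩^{-r}` over `⟨n - b⟩ ≥ M` are `≲ M^{1-r}` (`r > 1`); on each unit shell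
`k ≤ |n - b| ≤ k + 1` there are at most two lattice points, so both reduce to one-dimensional
sums of `(k+1)^{-s}`, compared with `∫ x^{-s} dx`. All pieces are then `≲ A^{1-α-β}`. The case
`α = 1` follows from the case `α < 1` by lowering both exponents slightly.
-/

/-- The Japanese bracket `⟨x⟩ = (1 + |x|²)^{1/2}` on `ℝ`. -/
noncomputable def jb (x : ℝ) : ℝ := Real.sqrt (1 + x ^ 2)

open Real Finset

lemma one_le_jb (x : ℝ) : 1 ≤ jb x :=
  Real.one_le_sqrt.mpr (by nlinarith)

lemma jb_pos (x : ℝ) : 0 < jb x := one_pos.trans_le (one_le_jb x)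

lemma abs_le_jb (x : ℝ) : |x| ≤ jb x :=
  Real.abs_le_sqrt (by nlinarith)

lemma jb_le_add_abs_sub (x y : ℝ) : jb x ≤ jb y + |x - y| := by
  have hy : jb y ^ 2 = 1 + y ^ 2 := Real.sq_sqrt (by positivity)
  have hyx : y * (x - y) ≤ jb y * |x - y| :=
    (le_abs_self _).trans (by rw [abs_mul]; gcongr; exact abs_le_jb y)
  refine (Real.sqrt_le_left (by positivity [jb_pos y])).mpr ?_
  nlinarith [sq_abs (x - y)]

lemma jb_le_one_add_abs (x : ℝ) : jb x ≤ 1 + |x| := by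
  simpa [jb] using jb_le_add_abs_sub x 0

lemma jb_le_add_jb_sub (x a : ℝ) : jb a ≤ jb x + jb (x - a) := by
  have := jb_le_add_abs_sub a x
  rw [abs_sub_comm] at this
  linarith [abs_le_jb (x - a)]

lemma one_add_abs_le_two_mul_jb (x : ℝ) : 1 + |x| ≤ 2 * jb x := by
  linarith [one_le_jb x, abs_le_jb x]

lemma rpow_neg_le_of_le_mul {x y c s : ℝ} (hx : 0 < x) (hc : 0 < c) (hs : 0 ≤ s)
    (h : x ≤ c * y) : y ^ (-s) ≤ c ^ s * x ^ (-s) := by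
  have hxy : x / c ≤ y := by rwa [div_le_iff₀' hc]
  calc y ^ (-s) ≤ (x / c) ^ (-s) := rpow_le_rpow_of_nonpos (by positivity) hxy (by linarith)
    _ = c ^ s * x ^ (-s) := by
      rw [div_rpow hx.le hc.le, rpow_neg hc.le, div_inv_eq_mul, mul_comm]

section Pointwise

variable {u v A α β : ℝ}

lemma rpow_neg_mul_rpow_neg_le_of_le (hu : 0 < u) (huv : u ≤ v) (hβ : 0 ≤ β) :
    u ^ (-α) * v ^ (-β) ≤ u ^ (-(α + β)) := by
  rw [neg_add, rpow_add hu]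
  exact mul_le_mul_of_nonneg_left (rpow_le_rpow_of_nonpos hu huv (by linarith))
    (rpow_nonneg hu.le _)

lemma rpow_neg_mul_rpow_neg_le_add (hu : 0 < u) (hv : 0 < v) (hα : 0 ≤ α) (hβ : 0 ≤ β) :
    u ^ (-α) * v ^ (-β) ≤ u ^ (-(α + β)) + v ^ (-(α + β)) := by
  have hu' := rpow_nonneg hu.le (-(α + β))
  have hv' := rpow_nonneg hv.le (-(α + β))
  rcases le_total u v with h | h
  · linarith [rpow_neg_mul_rpow_neg_le_of_le (α := α) hu h hβ]
  · have := rpow_neg_mul_rpow_neg_le_of_le (α := β) hv h hα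
    rw [mul_comm, add_comm] at this
    linarith

lemma rpow_neg_mul_rpow_neg_le_of_le_add (hu : 0 < u) (hv : 0 < v) (hA : 0 < A)
    (huv : A ≤ u + v) (hβ : 0 ≤ β) (hβα : β ≤ α) :
    u ^ (-α) * v ^ (-β) ≤ 2 ^ β * A ^ (-β) * (u ^ (-α) + v ^ (-α)) := by
  have hu' := rpow_nonneg hu.le (-α)
  have hv' := rpow_nonneg hv.le (-α)
  have hK : 0 ≤ 2 ^ β * A ^ (-β) := by positivity
  rcases le_total u v with h | h
  · have hvA : v ^ (-β) ≤ 2 ^ β * A ^ (-β) := rpow_neg_le_of_le_mul hA two_pos hβ (by linarith)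
    calc u ^ (-α) * v ^ (-β) ≤ 2 ^ β * A ^ (-β) * u ^ (-α) := by
          rw [mul_comm]; exact mul_le_mul_of_nonneg_right hvA hu'
      _ ≤ _ := mul_le_mul_of_nonneg_left (by linarith) hK
  · have huA : u ^ (-β) ≤ 2 ^ β * A ^ (-β) := rpow_neg_le_of_le_mul hA two_pos hβ (by linarith)
    -- move the excess decay `α - β` from the larger variable `u` to the smaller one `v`
    have hswap : u ^ (-α) * v ^ (-β) ≤ u ^ (-β) * v ^ (-α) := by
      have e : ∀ w : ℝ, 0 < w → w ^ (-α) = w ^ (-(α - β)) * w ^ (-β) := fun w hw => by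
        rw [← rpow_add hw]; ring_nf
      calc u ^ (-α) * v ^ (-β) = u ^ (-β) * v ^ (-β) * u ^ (-(α - β)) := by rw [e u hu]; ring
        _ ≤ u ^ (-β) * v ^ (-β) * v ^ (-(α - β)) :=
            mul_le_mul_of_nonneg_left (rpow_le_rpow_of_nonpos hv h (by linarith)) (by positivity)
        _ = u ^ (-β) * v ^ (-α) := by rw [e v hv]; ring
    calc u ^ (-α) * v ^ (-β) ≤ u ^ (-β) * v ^ (-α) := hswap
      _ ≤ 2 ^ β * A ^ (-β) * v ^ (-α) := mul_le_mul_of_nonneg_right huA hv'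
      _ ≤ _ := mul_le_mul_of_nonneg_left (by linarith) hK

lemma rpow_neg_mul_rpow_neg_le_ite (hu : 0 < u) (hA : 0 < A) (huv : u ≤ v) (hAv : A ≤ 2 * v)
    (hβ : 0 ≤ β) :
    u ^ (-α) * v ^ (-β) ≤ 2 ^ β * A ^ (-β) * (if u ≤ A then u ^ (-α) else 0) +
      (if A ≤ u then u ^ (-(α + β)) else 0) := by
  by_cases huA : u ≤ A
  · have hvA : v ^ (-β) ≤ 2 ^ β * A ^ (-β) := rpow_neg_le_of_le_mul hA two_pos hβ hAv
    have : 0 ≤ if A ≤ u then u ^ (-(α + β)) else 0 := by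
      split_ifs
      exacts [rpow_nonneg hu.le _, le_rfl]
    rw [if_pos huA, mul_comm (u ^ (-α))]
    linarith [mul_le_mul_of_nonneg_right hvA (rpow_nonneg hu.le (-α))]
  · rw [if_neg huA, if_pos (not_le.mp huA).le, mul_zero, zero_add]
    exact rpow_neg_mul_rpow_neg_le_of_le hu huv hβ

lemma rpow_neg_mul_rpow_neg_le_ite_add_ite (hu : 0 < u) (hv : 0 < v) (hA : 0 < A)
    (huv : A ≤ u + v) (hα : 0 ≤ α) (hβ : 0 ≤ β) :
    u ^ (-α) * v ^ (-β) ≤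
      2 ^ β * A ^ (-β) * (if u ≤ A then u ^ (-α) else 0) +
        2 ^ α * A ^ (-α) * (if v ≤ A then v ^ (-β) else 0) +
        ((if A ≤ u then u ^ (-(α + β)) else 0) + (if A ≤ v then v ^ (-(α + β)) else 0)) := by
  have h0 : ∀ w γ δ : ℝ, 0 < w → 0 ≤ if δ ≤ w then w ^ γ else 0 := fun w γ δ hw => by
    split_ifs; exacts [rpow_nonneg hw.le _, le_rfl]
  have h0' : ∀ w γ δ : ℝ, 0 < w → 0 ≤ if w ≤ δ then w ^ γ else 0 := fun w γ δ hw => by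
    split_ifs; exacts [rpow_nonneg hw.le _, le_rfl]
  have hKα : 0 ≤ 2 ^ α * A ^ (-α) := by positivity
  have hKβ : 0 ≤ 2 ^ β * A ^ (-β) := by positivity
  rcases le_total u v with h | h
  · have := rpow_neg_mul_rpow_neg_le_ite (α := α) hu hA h (by linarith) hβ
    linarith [h0 v (-(α + β)) A hv, mul_nonneg hKα (h0' v (-β) A hv)]
  · have := rpow_neg_mul_rpow_neg_le_ite (α := β) hv hA h (by linarith) hα
    rw [mul_comm, add_comm β] at this
    linarith [h0 u (-(α + β)) A hu, mul_nonneg hKβ (h0' u (-α) A hu)]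

end Pointwise

lemma sum_Ico_add_one_rpow_le {p : ℝ} (hp : p ≤ 0) (hp1 : p ≠ -1) {a b : ℕ} (hab : a < b) :
    ∑ k ∈ Ico a b, ((k : ℝ) + 1) ^ p ≤
      ((a : ℝ) + 1) ^ p + (b ^ (p + 1) - ((a : ℝ) + 1) ^ (p + 1)) / (p + 1) := by
  have hmono : AntitoneOn (fun x : ℝ => x ^ p) (Set.Icc ((a + 1 : ℕ) : ℝ) b) :=
    (antitoneOn_rpow_Ioi_of_exponent_nonpos hp).mono fun x hx => by
      simp only [Set.mem_Icc, Set.mem_Ioi] at hx ⊢; push_cast at hx; linarith [hx.1]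
  have hint := hmono.sum_le_integral_Ico (by omega)
  rw [integral_rpow (Or.inr ⟨hp1, ?_⟩)] at hint
  · rw [sum_eq_sum_Ico_succ_bot hab]
    push_cast at hint ⊢
    gcongr
  · rw [Set.uIcc_of_le (by push_cast; exact_mod_cast hab)]
    push_cast
    simp only [Set.mem_Icc, not_and, not_le]
    intro h; linarith

lemma sum_range_add_one_rpow_neg_le {s : ℝ} (hs0 : 0 ≤ s) (hs1 : s < 1) (N : ℕ) :
    ∑ k ∈ range N, ((k : ℝ) + 1) ^ (-s) ≤ (N : ℝ) ^ (1 - s) / (1 - s) := by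
  rcases Nat.eq_zero_or_pos N with rfl | hN
  · simp [zero_rpow (by linarith : 1 - s ≠ 0)]
  have h := sum_Ico_add_one_rpow_le (p := -s) (by linarith) (by linarith) hN
  rw [← range_eq_Ico] at h
  have hq : 0 < 1 - s := by linarith
  have e : -s + 1 = 1 - s := by ring
  simp only [CharP.cast_eq_zero, zero_add, one_rpow, e] at h
  refine h.trans ?_
  have : (N : ℝ) ^ (1 - s) / (1 - s) - (1 + ((N : ℝ) ^ (1 - s) - 1) / (1 - s)) = s / (1 - s) := by
    field_simp; ring
  linarith [div_nonneg hs0 hq.le]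

lemma sum_Ico_add_one_rpow_neg_le {r : ℝ} (hr : 1 < r) (a b : ℕ) :
    ∑ k ∈ Ico a b, ((k : ℝ) + 1) ^ (-r) ≤ r / (r - 1) * ((a : ℝ) + 1) ^ (1 - r) := by
  have hq : 0 < r - 1 := by linarith
  rcases le_or_gt b a with hba | hab
  · rw [Ico_eq_empty_of_le hba, sum_empty]; positivity
  refine (sum_Ico_add_one_rpow_le (p := -r) (by linarith) (by linarith) hab).trans ?_
  have e : -r + 1 = -(r - 1) := by ring
  rw [e, show (1 - r) = -(r - 1) by ring]
  have hb : 0 ≤ (b : ℝ) ^ (-(r - 1)) := by positivity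
  have hrr : ((a : ℝ) + 1) ^ (-r) ≤ ((a : ℝ) + 1) ^ (-(r - 1)) :=
    rpow_le_rpow_of_exponent_le (by linarith [(a.cast_nonneg : (0:ℝ) ≤ a)]) (by linarith)
  have : r / (r - 1) * ((a : ℝ) + 1) ^ (-(r - 1)) =
      ((a : ℝ) + 1) ^ (-(r - 1)) + ((a : ℝ) + 1) ^ (-(r - 1)) / (r - 1) := by
    field_simp; ring
  rw [div_neg, sub_div, this]
  linarith [div_nonneg hb hq.le]

lemma sum_range_ite_rpow_neg_le_of_lt_one {s L : ℝ} (hs0 : 0 ≤ s) (hs1 : s < 1) (hL : 0 ≤ L)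
    (K : ℕ) :
    ∑ k ∈ range K, (if (k : ℝ) + 1 ≤ L then ((k : ℝ) + 1) ^ (-s) else 0) ≤
      L ^ (1 - s) / (1 - s) := by
  rw [← sum_filter]
  have hsub : {k ∈ range K | ((k : ℕ) : ℝ) + 1 ≤ L} ⊆ range ⌊L⌋₊ := fun k hk => by
    rw [mem_filter] at hk
    rw [mem_range, ← Nat.add_one_le_iff, Nat.le_floor_iff hL]
    exact_mod_cast hk.2
  calc _ ≤ ∑ k ∈ range ⌊L⌋₊, ((k : ℝ) + 1) ^ (-s) :=
        sum_le_sum_of_subset_of_nonneg hsub fun _ _ _ => by positivity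
    _ ≤ (⌊L⌋₊ : ℝ) ^ (1 - s) / (1 - s) := sum_range_add_one_rpow_neg_le hs0 hs1 _
    _ ≤ L ^ (1 - s) / (1 - s) := by
        have := Nat.floor_le hL
        gcongr

lemma sum_range_ite_rpow_neg_le_of_one_lt {r L : ℝ} (hr : 1 < r) (hL : 0 < L) (K : ℕ) :
    ∑ k ∈ range K, (if L ≤ (k : ℝ) + 1 then ((k : ℝ) + 1) ^ (-r) else 0) ≤
      r / (r - 1) * L ^ (1 - r) := by
  rw [← sum_filter]
  have hsub : {k ∈ range K | L ≤ ((k : ℕ) : ℝ) + 1} ⊆ Ico (⌈L⌉₊ - 1) K := fun k hk => by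
    rw [mem_filter, mem_range] at hk
    have : ⌈L⌉₊ ≤ k + 1 := Nat.ceil_le.mpr (by exact_mod_cast hk.2)
    rw [mem_Ico]; omega
  have hL' : L ≤ ((⌈L⌉₊ - 1 : ℕ) : ℝ) + 1 := by
    have h1 : 1 ≤ ⌈L⌉₊ := Nat.one_le_iff_ne_zero.mpr (by positivity)
    rw [Nat.cast_sub h1, Nat.cast_one, sub_add_cancel]
    exact Nat.le_ceil L
  calc _ ≤ ∑ k ∈ Ico (⌈L⌉₊ - 1) K, ((k : ℝ) + 1) ^ (-r) :=
        sum_le_sum_of_subset_of_nonneg hsub fun _ _ _ => by positivity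
    _ ≤ r / (r - 1) * (((⌈L⌉₊ - 1 : ℕ) : ℝ) + 1) ^ (1 - r) := sum_Ico_add_one_rpow_neg_le hr _ _
    _ ≤ r / (r - 1) * L ^ (1 - r) := by
        refine mul_le_mul_of_nonneg_left (rpow_le_rpow_of_nonpos hL hL' (by linarith)) ?_
        exact div_nonneg (by linarith) (by linarith)

lemma summable_and_tsum_le_of_shell {F : ℝ → ℝ} {g : ℕ → ℝ} {c : ℝ} (hF : ∀ t, 0 ≤ F t)
    (hFg : ∀ (k : ℕ) (t : ℝ), k ≤ |t| → |t| ≤ k + 1 → F t ≤ g k)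
    (hg : ∀ K, ∑ k ∈ range K, g k ≤ c) (b : ℝ) :
    Summable (fun n : ℤ => F (n - b)) ∧ ∑' n : ℤ, F (n - b) ≤ 2 * c := by
  have hg0 : ∀ k, 0 ≤ g k := fun k => (hF k).trans (hFg k k (by simp) (by simp))
  have hgs : Summable g := summable_of_sum_range_le hg0 hg
  have hgc : ∑' k, g k ≤ c := Real.tsum_le_of_sum_range_le hg0 hg
  -- split `ℤ` at `⌈b⌉`: the `k`-th integer on either side lies in the shell `k ≤ |n - b| ≤ k + 1`
  set m := ⌈b⌉
  set θ := (m : ℝ) - b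
  have hθ₀ : 0 ≤ θ := sub_nonneg.mpr (Int.le_ceil b)
  have hθ₁ : θ < 1 := by linarith [Int.ceil_lt_add_one b]
  set f : ℤ → ℝ := fun j => F (j + θ)
  have hright : ∀ k : ℕ, f k ≤ g k := fun k => by
    have : |((k : ℤ) : ℝ) + θ| = k + θ := by push_cast; exact abs_of_nonneg (by positivity)
    exact hFg k _ (by rw [this]; linarith) (by rw [this]; linarith)
  have hleft : ∀ k : ℕ, f (-(k + 1)) ≤ g k := fun k => by
    have : |((-(k + 1) : ℤ) : ℝ) + θ| = k + 1 - θ := by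
      rw [abs_of_nonpos (by push_cast; linarith)]; push_cast; ring
    exact hFg k _ (by rw [this]; linarith) (by rw [this]; linarith)
  have hs₁ : Summable fun k : ℕ => f k := hgs.of_nonneg_of_le (fun _ => hF _) hright
  have hs₂ : Summable fun k : ℕ => f (-(k + 1)) := hgs.of_nonneg_of_le (fun _ => hF _) hleft
  have hf : (fun n : ℤ => F (n - b)) ∘ Equiv.addRight m = f := by
    ext j; simp only [Function.comp_apply, Equiv.coe_addRight, Int.cast_add, f, θ]; ring_nf
  refine ⟨(Equiv.addRight m).summable_iff.mp (hf ▸ hs₁.of_nat_of_neg_add_one hs₂), ?_⟩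
  calc ∑' n : ℤ, F (n - b) = ∑' j, f j := by rw [← hf]; exact ((Equiv.addRight m).tsum_eq _).symm
    _ = ∑' k : ℕ, f k + ∑' k : ℕ, f (-(k + 1)) := tsum_of_nat_of_neg_add_one hs₁ hs₂
    _ ≤ 2 * c := by linarith [hs₁.tsum_le_tsum hright hgs, hs₂.tsum_le_tsum hleft hgs]

lemma summable_and_tsum_jb_sub_le {F : ℝ → ℝ} {g : ℕ → ℝ} {c : ℝ} (hF : ∀ t, 0 ≤ F t)
    (hFg : ∀ (k : ℕ) (t : ℝ), (k : ℝ) + 1 ≤ 2 * jb t → jb t ≤ 2 * ((k : ℝ) + 1) → F t ≤ g k)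
    (hg : ∀ K, ∑ k ∈ range K, g k ≤ c) (b : ℝ) :
    Summable (fun n : ℤ => F (n - b)) ∧ ∑' n : ℤ, F (n - b) ≤ 2 * c :=
  summable_and_tsum_le_of_shell hF (fun k t hk hk' => hFg k t
    (by linarith [one_add_abs_le_two_mul_jb t]) (by linarith [jb_le_one_add_abs t])) hg b

section LatticeSums

variable {s r : ℝ}

lemma exists_forall_tsum_ite_jb_sub_le_le (hs0 : 0 ≤ s) (hs1 : s < 1) :
    ∃ C, ∀ b M : ℝ, 0 ≤ M →
      Summable (fun n : ℤ => if jb (n - b) ≤ M then jb (n - b) ^ (-s) else 0) ∧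
      ∑' n : ℤ, (if jb (n - b) ≤ M then jb (n - b) ^ (-s) else 0) ≤ C * M ^ (1 - s) := by
  refine ⟨2 * (2 ^ s * (2 ^ (1 - s) / (1 - s))), fun b M hM => ?_⟩
  obtain ⟨hsum, hle⟩ := summable_and_tsum_jb_sub_le
    (F := fun t => if jb t ≤ M then jb t ^ (-s) else 0)
    (g := fun k => 2 ^ s * if (k : ℝ) + 1 ≤ 2 * M then ((k : ℝ) + 1) ^ (-s) else 0)
    (fun t => by split_ifs; exacts [rpow_nonneg (jb_pos t).le _, le_rfl])
    (fun k t hk hk' => by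
      split_ifs with ht h2
      · exact rpow_neg_le_of_le_mul (by positivity) two_pos hs0 hk
      · exact absurd (hk.trans (by linarith)) h2
      · positivity
      · simp)
    (fun K => by
      rw [← mul_sum]
      exact mul_le_mul_of_nonneg_left
        (sum_range_ite_rpow_neg_le_of_lt_one hs0 hs1 (by positivity) K) (by positivity)) b
  refine ⟨hsum, hle.trans_eq ?_⟩
  rw [mul_rpow zero_le_two hM]
  ring

lemma exists_forall_tsum_ite_le_jb_sub_le (hr : 1 < r) :
    ∃ C, ∀ b M : ℝ, 0 < M →
      Summable (fun n : ℤ => if M ≤ jb (n - b) then jb (n - b) ^ (-r) else 0) ∧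
      ∑' n : ℤ, (if M ≤ jb (n - b) then jb (n - b) ^ (-r) else 0) ≤ C * M ^ (1 - r) := by
  refine ⟨2 * (2 ^ r * (r / (r - 1) / 2 ^ (1 - r))), fun b M hM => ?_⟩
  obtain ⟨hsum, hle⟩ := summable_and_tsum_jb_sub_le
    (F := fun t => if M ≤ jb t then jb t ^ (-r) else 0)
    (g := fun k => 2 ^ r * if M / 2 ≤ (k : ℝ) + 1 then ((k : ℝ) + 1) ^ (-r) else 0)
    (fun t => by split_ifs; exacts [rpow_nonneg (jb_pos t).le _, le_rfl])
    (fun k t hk hk' => by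
      split_ifs with ht h2
      · exact rpow_neg_le_of_le_mul (by positivity) two_pos (by linarith) hk
      · exact absurd (by linarith) h2
      · positivity
      · simp)
    (fun K => by
      rw [← mul_sum]
      exact mul_le_mul_of_nonneg_left
        (sum_range_ite_rpow_neg_le_of_one_lt hr (by positivity) K) (by positivity)) b
  refine ⟨hsum, hle.trans_eq ?_⟩
  rw [div_rpow hM.le zero_le_two]
  ring

lemma exists_forall_tsum_jb_sub_rpow_neg_le (hr : 1 < r) :
    ∃ C, ∀ b : ℝ, Summable (fun n : ℤ => jb (n - b) ^ (-r)) ∧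
      ∑' n : ℤ, jb (n - b) ^ (-r) ≤ C := by
  obtain ⟨C, hC⟩ := exists_forall_tsum_ite_le_jb_sub_le hr
  exact ⟨C, fun b => by simpa only [one_le_jb, if_true, one_rpow, mul_one] using hC b 1 one_pos⟩

end LatticeSums

lemma exists_pos_of_forall_le_mul {ι : Type*} {f g : ι → ℝ} (hg : ∀ i, 0 ≤ g i)
    (h : ∃ C, ∀ i, f i ≤ C * g i) : ∃ C, 0 < C ∧ ∀ i, f i ≤ C * g i := by
  obtain ⟨C, hC⟩ := h
  exact ⟨max C 1, by positivity,
    fun i => (hC i).trans (mul_le_mul_of_nonneg_right (le_max_left _ _) (hg i))⟩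

section MainEstimates

variable {α β : ℝ}

lemma summable_jb_rpow_neg_mul_jb_sub_rpow_neg (hα : 0 ≤ α) (hβ : 0 ≤ β) (h : 1 < α + β)
    (a : ℝ) : Summable fun n : ℤ => jb n ^ (-α) * jb (n - a) ^ (-β) := by
  obtain ⟨C, hC⟩ := exists_forall_tsum_jb_sub_rpow_neg_le h
  have h0 : Summable fun n : ℤ => jb n ^ (-(α + β)) := by simpa using (hC 0).1
  refine (h0.add (hC a).1).of_nonneg_of_le (fun n => by positivity [jb_pos n, jb_pos (n - a)])
    fun n => rpow_neg_mul_rpow_neg_le_add (jb_pos _) (jb_pos _) hα hβ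

lemma exists_tsum_le_of_one_lt (hα : 1 < α) (hβ : 0 ≤ β) (hβα : β ≤ α) :
    ∃ C, ∀ a : ℝ, ∑' n : ℤ, jb n ^ (-α) * jb (n - a) ^ (-β) ≤ C * jb a ^ (-β) := by
  obtain ⟨C, hC⟩ := exists_forall_tsum_jb_sub_rpow_neg_le hα
  refine ⟨2 ^ β * (C + C), fun a => ?_⟩
  obtain ⟨hs₀, hC₀⟩ := hC 0
  obtain ⟨hsₐ, hCₐ⟩ := hC a
  simp only [sub_zero] at hs₀ hC₀
  have hK : 0 ≤ 2 ^ β * jb a ^ (-β) := mul_nonneg (by positivity) (rpow_nonneg (jb_pos a).le _)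
  calc ∑' n : ℤ, jb n ^ (-α) * jb (n - a) ^ (-β)
      ≤ ∑' n : ℤ, 2 ^ β * jb a ^ (-β) * (jb n ^ (-α) + jb (n - a) ^ (-α)) :=
        (summable_jb_rpow_neg_mul_jb_sub_rpow_neg (by linarith) hβ (by linarith) a).tsum_le_tsum
          (fun n => rpow_neg_mul_rpow_neg_le_of_le_add (jb_pos _) (jb_pos _) (jb_pos a)
            (jb_le_add_jb_sub _ _) hβ hβα) ((hs₀.add hsₐ).mul_left _)
    _ = 2 ^ β * jb a ^ (-β) * (∑' n : ℤ, jb n ^ (-α) + ∑' n : ℤ, jb (n - a) ^ (-α)) := by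
        rw [tsum_mul_left, hs₀.tsum_add hsₐ]
    _ ≤ 2 ^ β * jb a ^ (-β) * (C + C) := mul_le_mul_of_nonneg_left (add_le_add hC₀ hCₐ) hK
    _ = 2 ^ β * (C + C) * jb a ^ (-β) := by ring

lemma exists_tsum_le_of_lt_one (hα0 : 0 ≤ α) (hα1 : α < 1) (hβ0 : 0 ≤ β) (hβ1 : β < 1)
    (h : 1 < α + β) :
    ∃ C, ∀ a : ℝ, ∑' n : ℤ, jb n ^ (-α) * jb (n - a) ^ (-β) ≤ C * jb a ^ (1 - (α + β)) := by
  obtain ⟨C₁, h₁⟩ := exists_forall_tsum_ite_jb_sub_le_le hα0 hα1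
  obtain ⟨C₂, h₂⟩ := exists_forall_tsum_ite_jb_sub_le_le hβ0 hβ1
  obtain ⟨C₃, h₃⟩ := exists_forall_tsum_ite_le_jb_sub_le h
  refine ⟨2 ^ β * C₁ + 2 ^ α * C₂ + (C₃ + C₃), fun a => ?_⟩
  set A := jb a
  have hA : 0 < A := jb_pos a
  obtain ⟨s₁, b₁⟩ := h₁ 0 A hA.le
  obtain ⟨s₂, b₂⟩ := h₂ a A hA.le
  obtain ⟨s₃, b₃⟩ := h₃ 0 A hA
  obtain ⟨s₄, b₄⟩ := h₃ a A hA
  simp only [sub_zero] at s₁ b₁ s₃ b₃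
  have hKβ : 0 ≤ 2 ^ β * A ^ (-β) := mul_nonneg (by positivity) (rpow_nonneg hA.le _)
  have hKα : 0 ≤ 2 ^ α * A ^ (-α) := mul_nonneg (by positivity) (rpow_nonneg hA.le _)
  have e : ∀ γ δ : ℝ, γ + δ = α + β → A ^ (-γ) * A ^ (1 - δ) = A ^ (1 - (α + β)) :=
    fun γ δ hγδ => by rw [← rpow_add hA, ← hγδ]; ring_nf
  refine ((summable_jb_rpow_neg_mul_jb_sub_rpow_neg hα0 hβ0 h a).tsum_le_tsum
    (fun n : ℤ => rpow_neg_mul_rpow_neg_le_ite_add_ite (jb_pos n) (jb_pos (n - a)) hA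
      (jb_le_add_jb_sub n a) hα0 hβ0)
    (((s₁.mul_left _).add (s₂.mul_left _)).add (s₃.add s₄))).trans ?_
  rw [((s₁.mul_left _).add (s₂.mul_left _)).tsum_add (s₃.add s₄),
    (s₁.mul_left _).tsum_add (s₂.mul_left _), s₃.tsum_add s₄, tsum_mul_left, tsum_mul_left]
  calc _ ≤ 2 ^ β * A ^ (-β) * (C₁ * A ^ (1 - α)) + 2 ^ α * A ^ (-α) * (C₂ * A ^ (1 - β)) +
        (C₃ * A ^ (1 - (α + β)) + C₃ * A ^ (1 - (α + β))) := by
        gcongr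
    _ = _ := by linear_combination 2 ^ β * C₁ * e β α (add_comm _ _) + 2 ^ α * C₂ * e α β rfl

lemma exists_tsum_le_of_eq_one {ε : ℝ} (hβ0 : 0 < β) (hβ1 : β ≤ 1) (hε : 0 < ε) :
    ∃ C, ∀ a : ℝ, ∑' n : ℤ, jb n ^ (-1 : ℝ) * jb (n - a) ^ (-β) ≤ C * jb a ^ (-(β - ε)) := by
  obtain ⟨δ, hδ, hδε, hδβ, hδ1⟩ : ∃ δ : ℝ, 0 < δ ∧ δ ≤ ε / 2 ∧ δ < β ∧ δ < 1 / 2 :=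
    ⟨min (ε / 2) (min (β / 2) (1 / 4)), by positivity, min_le_left _ _,
      (min_le_right _ _).trans_lt ((min_le_left _ _).trans_lt (by linarith)),
      (min_le_right _ _).trans_lt ((min_le_right _ _).trans_lt (by norm_num))⟩
  set β' := min β (1 - δ)
  have hβ'δ : δ < β' := lt_min hδβ (by linarith)
  have hβ'1 : β' < 1 := (min_le_right _ _).trans_lt (by linarith)
  obtain ⟨C, hC0, hC⟩ := exists_pos_of_forall_le_mul (fun a => rpow_nonneg (jb_pos a).le _)
    (exists_tsum_le_of_lt_one (α := 1 - δ) (β := β') (by linarith) (by linarith) (by linarith)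
      hβ'1 (by linarith))
  have hexp : 1 - (1 - δ + β') ≤ -(β - ε) := by
    have : β + δ - ε ≤ β' := le_min (by linarith) (by linarith)
    linarith
  refine ⟨C, fun a => ?_⟩
  calc ∑' n : ℤ, jb n ^ (-1 : ℝ) * jb (n - a) ^ (-β)
      ≤ ∑' n : ℤ, jb n ^ (-(1 - δ)) * jb (n - a) ^ (-β') :=
        (summable_jb_rpow_neg_mul_jb_sub_rpow_neg zero_le_one hβ0.le (by linarith) a).tsum_le_tsum
          (fun n => mul_le_mul
            (rpow_le_rpow_of_exponent_le (one_le_jb _) (by linarith))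
            (rpow_le_rpow_of_exponent_le (one_le_jb _) (by linarith [min_le_left β (1 - δ)]))
            (rpow_nonneg (jb_pos _).le _) (rpow_nonneg (jb_pos _).le _))
          (summable_jb_rpow_neg_mul_jb_sub_rpow_neg (by linarith) (by linarith) (by linarith) a)
    _ ≤ C * jb a ^ (1 - (1 - δ + β')) := hC a
    _ ≤ C * jb a ^ (-(β - ε)) :=
        mul_le_mul_of_nonneg_left (rpow_le_rpow_of_exponent_le (one_le_jb a) hexp) hC0.le

end MainEstimates

open Classical in
theorem stmt1 (α β ε : ℝ) (hαβ : β ≤ α) (hβ : 0 ≤ β) (hsum : 1 < α + β) (hε : 0 < ε) :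
    ∃ C : ℝ, 0 < C ∧ ∀ a : ℝ,
      (∑' n : ℤ, 1 / (jb (n : ℝ) ^ α * jb ((n : ℝ) - a) ^ β)) ≤
        C * jb a ^ (-(β - (if α = 1 then ε else max (1 - α) 0))) := by
  simp_rw [one_div, mul_inv, ← rpow_neg (jb_pos _).le]
  refine exists_pos_of_forall_le_mul (fun a => rpow_nonneg (jb_pos a).le _) ?_
  rcases lt_trichotomy α 1 with hα | rfl | hα
  · rw [if_neg hα.ne, max_eq_left (by linarith)]
    obtain ⟨C, hC⟩ := exists_tsum_le_of_lt_one (by linarith) hα hβ (by linarith) hsum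
    exact ⟨C, fun a => (hC a).trans_eq (by ring_nf)⟩
  · rw [if_pos rfl]
    exact exists_tsum_le_of_eq_one (by linarith) hαβ hε
  · rw [if_neg hα.ne', max_eq_right (by linarith), sub_zero]
    exact exists_tsum_le_of_one_lt hα hβ hαβ
end

section
/- For every ε > 0 there exists a constant C_ε > 0 such that for every m ∈ ℤ \ {0}, every a₀, b₀ ∈ ℤ, and every M, N ≥ 1, the number of pairs (a, b) ∈ ℤ² with m = a·b, |a − a₀| ≤ M, and |b − b₀| ≤ N is at most C_ε M^ε N^ε. -/
/-!
Write `n = |m|`. The map `(a, b) ↦ (sign a, |a|, |b|)` is injective on the solutions, and `|a|`,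
`|b|` range over intervals of lengths `2M`, `2N`; so it suffices to count factorisations
`n = d₁ d₂` with `d₁` in a real interval of length `X` and `d₂` in one of length `Y`.

This is done by induction on `n`, removing a prime `p` with `p ^ e ∥ n`. Grouped by
`i = v_p(d₁)`, the class `i` embeds, after dividing `d₁` by `p ^ i` and `d₂` by `p ^ (e - i)`,
into the factorisations of `n / p ^ e` in a box of area `XY / p ^ e`. Two distinct multiples of
`q` in an interval of length `X` force `q ≤ X`; so at most one class has `p ^ i > X`, and if
`XY < p ^ e` there are at most two factorisations altogether. For each of the boundedly many
primes `p ≤ B` this leaves at most `log₂ X + 2` classes; for `p > B`, chosen so that `p ^ η ≥ 8`,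
the `e + 1` classes are paid for by the factor `(p ^ e) ^ η ≥ 8 ^ e` lost in `(XY + 2) ^ η`.
The resulting bound `2 (log₂ X + 2) ^ (B + 1) (XY + 2) ^ η` is `O(X ^ (2η) Y ^ η)`.
-/

open Finset

theorem cast_le_of_dvd_of_mem_Icc {q a b : ℕ} (hqa : q ∣ a) (hqb : q ∣ b) (hab : a ≠ b)
    {α X : ℝ} (ha : (a : ℝ) ∈ Set.Icc α (α + X)) (hb : (b : ℝ) ∈ Set.Icc α (α + X)) :
    (q : ℝ) ≤ X := by
  wlog h : a < b generalizing a b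
  · exact this hqb hqa hab.symm hb ha (by omega)
  have hq : (q : ℝ) ≤ ((b - a : ℕ) : ℝ) :=
    Nat.cast_le.2 (Nat.le_of_dvd (Nat.sub_pos_of_lt h) (Nat.dvd_sub hqb hqa))
  rw [Nat.cast_sub h.le] at hq
  linarith [ha.1, hb.2]

theorem cast_div_mem_Icc {c k : ℕ} (hk : k ∣ c) (hk0 : 0 < k) {γ Z : ℝ}
    (h : (c : ℝ) ∈ Set.Icc γ (γ + Z)) :
    ((c / k : ℕ) : ℝ) ∈ Set.Icc (γ / k) (γ / k + Z / k) := by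
  have hk0' : (0 : ℝ) < k := Nat.cast_pos.2 hk0
  rw [Nat.cast_div hk hk0'.ne', ← add_div]
  exact ⟨div_le_div_of_nonneg_right h.1 hk0'.le, div_le_div_of_nonneg_right h.2 hk0'.le⟩

theorem card_le_card_image_mul {ι κ : Type*} [DecidableEq κ] (s : Finset ι) (f : ι → κ) {F : ℝ}
    (h : ∀ k ∈ s.image f, ({a ∈ s | f a = k}.card : ℝ) ≤ F) :
    (s.card : ℝ) ≤ (s.image f).card * F := by
  rw [card_eq_sum_card_image f s, Nat.cast_sum, ← nsmul_eq_mul]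
  exact sum_le_card_nsmul _ _ _ h

noncomputable def boxDivisors (n : ℕ) (α X β Y : ℝ) : Finset (ℕ × ℕ) :=
  n.divisorsAntidiagonal.filter fun d =>
    (d.1 : ℝ) ∈ Set.Icc α (α + X) ∧ (d.2 : ℝ) ∈ Set.Icc β (β + Y)

theorem mem_boxDivisors {n : ℕ} {α X β Y : ℝ} {d : ℕ × ℕ} :
    d ∈ boxDivisors n α X β Y ↔ (d.1 * d.2 = n ∧ n ≠ 0) ∧
      (d.1 : ℝ) ∈ Set.Icc α (α + X) ∧ (d.2 : ℝ) ∈ Set.Icc β (β + Y) := by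
  rw [boxDivisors, mem_filter, Nat.mem_divisorsAntidiagonal]

section boxDivisors

variable {n : ℕ} {α X β Y : ℝ} {d d' : ℕ × ℕ}

theorem ne_zero_of_mem_boxDivisors (hd : d ∈ boxDivisors n α X β Y) : d.1 ≠ 0 ∧ d.2 ≠ 0 :=
  have hd := (mem_filter.1 hd).1
  ⟨Nat.left_ne_zero_of_mem_divisorsAntidiagonal hd,
    Nat.right_ne_zero_of_mem_divisorsAntidiagonal hd⟩

theorem ne_and_ne_of_mem_boxDivisors (hd : d ∈ boxDivisors n α X β Y)
    (hd' : d' ∈ boxDivisors n α X β Y) (hne : d ≠ d') : d.1 ≠ d'.1 ∧ d.2 ≠ d'.2 := by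
  have h := (mem_boxDivisors.1 hd).1.1
  have h' := (mem_boxDivisors.1 hd').1.1
  obtain ⟨h1, h2⟩ := ne_zero_of_mem_boxDivisors hd
  refine ⟨fun e1 => hne (Prod.ext e1 ?_), fun e2 => hne (Prod.ext ?_ e2)⟩
  · exact Nat.eq_of_mul_eq_mul_left (Nat.pos_of_ne_zero h1) (by rw [h, e1, h'])
  · exact Nat.eq_of_mul_eq_mul_right (Nat.pos_of_ne_zero h2) (by rw [h, e2, h'])

theorem factorization_fst_add_snd (hd : d ∈ boxDivisors n α X β Y) (p : ℕ) :
    d.1.factorization p + d.2.factorization p = n.factorization p := by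
  obtain ⟨h1, h2⟩ := ne_zero_of_mem_boxDivisors hd
  rw [← (mem_boxDivisors.1 hd).1.1, Nat.factorization_mul h1 h2, Finsupp.add_apply]

theorem div_mem_boxDivisors {a b : ℕ} (hd : d ∈ boxDivisors n α X β Y) (ha : a ∣ d.1)
    (hb : b ∣ d.2) :
    (d.1 / a, d.2 / b) ∈ boxDivisors (n / (a * b)) (α / a) (X / a) (β / b) (Y / b) := by
  obtain ⟨⟨hmul, -⟩, h1, h2⟩ := mem_boxDivisors.1 hd
  obtain ⟨hd1, hd2⟩ := ne_zero_of_mem_boxDivisors hd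
  have ha0 : 0 < a := Nat.pos_of_dvd_of_pos ha (Nat.pos_of_ne_zero hd1)
  have hb0 : 0 < b := Nat.pos_of_dvd_of_pos hb (Nat.pos_of_ne_zero hd2)
  have hprod : d.1 / a * (d.2 / b) = n / (a * b) := by rw [Nat.div_mul_div_comm ha hb, hmul]
  refine mem_boxDivisors.2
    ⟨⟨hprod, ?_⟩, cast_div_mem_Icc ha ha0 h1, cast_div_mem_Icc hb hb0 h2⟩
  rw [← hprod]
  exact mul_ne_zero (Nat.div_ne_zero_iff_of_dvd ha |>.2 ⟨hd1, ha0.ne'⟩)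
    (Nat.div_ne_zero_iff_of_dvd hb |>.2 ⟨hd2, hb0.ne'⟩)

theorem pow_factorization_le_of_le (hd : d ∈ boxDivisors n α X β Y)
    (hd' : d' ∈ boxDivisors n α X β Y) (hne : d ≠ d') {p : ℕ}
    (hle : d.1.factorization p ≤ d'.1.factorization p) :
    (p : ℝ) ^ d.1.factorization p ≤ X ∧ (p : ℝ) ^ d'.2.factorization p ≤ Y := by
  obtain ⟨hne1, hne2⟩ := ne_and_ne_of_mem_boxDivisors hd hd' hne
  have hle' : d'.2.factorization p ≤ d.2.factorization p := by
    have := factorization_fst_add_snd hd p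
    have := factorization_fst_add_snd hd' p
    omega
  have I := (mem_boxDivisors.1 hd).2
  have I' := (mem_boxDivisors.1 hd').2
  constructor
  · exact_mod_cast cast_le_of_dvd_of_mem_Icc (Nat.ordProj_dvd _ _)
      ((pow_dvd_pow p hle).trans (Nat.ordProj_dvd _ _)) hne1 I.1 I'.1
  · exact_mod_cast cast_le_of_dvd_of_mem_Icc
      ((pow_dvd_pow p hle').trans (Nat.ordProj_dvd _ _)) (Nat.ordProj_dvd _ _) hne2 I.2 I'.2

theorem card_filter_lt_pow_fst_le_one (p : ℕ) :
    {d ∈ boxDivisors n α X β Y | X < (p : ℝ) ^ d.1.factorization p}.card ≤ 1 := by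
  refine card_le_one.2 fun d hd d' hd' => ?_
  rw [mem_filter] at hd hd'
  by_contra hne
  rcases le_total (d.1.factorization p) (d'.1.factorization p) with hle | hle
  · exact (pow_factorization_le_of_le hd.1 hd'.1 hne hle).1.not_gt hd.2
  · exact (pow_factorization_le_of_le hd'.1 hd.1 (Ne.symm hne) hle).1.not_gt hd'.2

theorem card_filter_lt_pow_snd_le_one (p : ℕ) :
    {d ∈ boxDivisors n α X β Y | Y < (p : ℝ) ^ d.2.factorization p}.card ≤ 1 := by
  refine card_le_one.2 fun d hd d' hd' => ?_
  rw [mem_filter] at hd hd'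
  by_contra hne
  rcases le_total (d.1.factorization p) (d'.1.factorization p) with hle | hle
  · exact (pow_factorization_le_of_le hd.1 hd'.1 hne hle).2.not_gt hd'.2
  · exact (pow_factorization_le_of_le hd'.1 hd.1 (Ne.symm hne) hle).2.not_gt hd.2

theorem card_boxDivisors_le_two {p : ℕ} (h : X * Y < (p : ℝ) ^ n.factorization p) :
    (boxDivisors n α X β Y).card ≤ 2 := by
  set S := boxDivisors n α X β Y
  have hS : S ⊆ {d ∈ S | X < (p : ℝ) ^ d.1.factorization p} ∪
      {d ∈ S | Y < (p : ℝ) ^ d.2.factorization p} := by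
    intro d hd
    simp only [mem_union, mem_filter]
    by_contra! hle
    have h1 := hle.1 hd
    have h2 := hle.2 hd
    rw [← factorization_fst_add_snd hd, pow_add] at h
    exact h.not_ge
      (mul_le_mul h1 h2 (by positivity) ((pow_nonneg p.cast_nonneg _).trans h1))
  calc S.card ≤ 1 + 1 := (card_le_card hS).trans
        ((card_union_le _ _).trans (add_le_add (card_filter_lt_pow_fst_le_one p)
          (card_filter_lt_pow_snd_le_one p)))
    _ = 2 := rfl

theorem card_image_factorization_fst_le_factorization_add_one (p : ℕ) :
    ((boxDivisors n α X β Y).image (·.1.factorization p)).card ≤ n.factorization p + 1 := by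
  refine (card_le_card fun i hi => ?_).trans (card_range _).le
  obtain ⟨d, hd, rfl⟩ := mem_image.1 hi
  have := factorization_fst_add_snd hd p
  exact mem_range.2 (by omega)

theorem card_image_factorization_fst_le_log {p : ℕ} (hp : 2 ≤ p) :
    ((boxDivisors n α X β Y).image (·.1.factorization p)).card ≤ Nat.log 2 ⌊X⌋₊ + 2 := by
  set S := boxDivisors n α X β Y
  have hsub : S.image (·.1.factorization p) ⊆ range (Nat.log 2 ⌊X⌋₊ + 1) ∪
      {d ∈ S | X < (p : ℝ) ^ d.1.factorization p}.image (·.1.factorization p) := by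
    intro i hi
    obtain ⟨d, hd, rfl⟩ := mem_image.1 hi
    rcases lt_or_ge X ((p : ℝ) ^ d.1.factorization p) with hX | hX
    · exact mem_union_right _ (mem_image_of_mem _ (mem_filter.2 ⟨hd, hX⟩))
    have h2X : ((2 ^ d.1.factorization p : ℕ) : ℝ) ≤ X := by
      push_cast
      exact (pow_le_pow_left₀ zero_le_two (by exact_mod_cast hp) _).trans hX
    exact mem_union_left _ (mem_range.2
      (Nat.lt_succ_of_le (Nat.le_log_of_pow_le one_lt_two (Nat.le_floor h2X))))
  calc _ ≤ (range _ ∪ _).card := card_le_card hsub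
    _ ≤ (Nat.log 2 ⌊X⌋₊ + 1) + 1 := (card_union_le _ _).trans
        (add_le_add (card_range _).le (card_image_le.trans (card_filter_lt_pow_fst_le_one p)))

theorem card_filter_factorization_fst_eq_le {p i : ℕ} (hi : i ≤ n.factorization p) :
    {d ∈ boxDivisors n α X β Y | d.1.factorization p = i}.card ≤
      (boxDivisors (ordCompl[p] n) (α / p ^ i) (X / p ^ i) (β / p ^ (n.factorization p - i))
        (Y / p ^ (n.factorization p - i))).card := by
  set j := n.factorization p - i
  have hdvd : ∀ d ∈ {d ∈ boxDivisors n α X β Y | d.1.factorization p = i},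
      p ^ i ∣ d.1 ∧ p ^ j ∣ d.2 := by
    intro d hd
    obtain ⟨hdS, rfl⟩ := mem_filter.1 hd
    have hj : d.2.factorization p = j := by have := factorization_fst_add_snd hdS p; omega
    exact ⟨Nat.ordProj_dvd _ _, hj ▸ Nat.ordProj_dvd _ _⟩
  refine card_le_card_of_injOn (fun d => (d.1 / p ^ i, d.2 / p ^ j)) (fun d hd => ?_) ?_
  · have := div_mem_boxDivisors (mem_filter.1 hd).1 (hdvd d hd).1 (hdvd d hd).2
    rwa [← pow_add, Nat.add_sub_cancel' hi, Nat.cast_pow, Nat.cast_pow] at this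
  · intro d hd d' hd' h
    obtain ⟨h1, h2⟩ := Prod.mk.inj h
    exact Prod.ext ((Nat.div_left_inj (hdvd d hd).1 (hdvd d' hd').1).1 h1)
      ((Nat.div_left_inj (hdvd d hd).2 (hdvd d' hd').2).1 h2)

end boxDivisors

def smallPrimeFactors (B n : ℕ) : Finset ℕ := n.primeFactors.filter (· ≤ B)

theorem smallPrimeFactors_ordCompl (B n p : ℕ) :
    smallPrimeFactors B (ordCompl[p] n) = (smallPrimeFactors B n).erase p := by
  simp only [smallPrimeFactors, ← Nat.support_factorization, Nat.factorization_ordCompl,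
    Finsupp.support_erase, filter_erase]

theorem card_smallPrimeFactors_le (B n : ℕ) : (smallPrimeFactors B n).card ≤ B + 1 :=
  (card_le_card fun _ hq => mem_range.2 (Nat.lt_succ_of_le (mem_filter.1 hq).2)).trans
    (card_range _).le

theorem add_one_mul_rpow_le {ε q Z : ℝ} (hε : 0 < ε) (hε1 : ε ≤ 1) (hq : 0 ≤ q)
    (h8 : 8 ≤ q ^ ε) {e : ℕ} (he : 1 ≤ e) (hZ : 1 ≤ Z) :
    (e + 1) * (Z + 2) ^ ε ≤ (q ^ e * Z + 2) ^ ε := by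
  have hZ0 : 0 ≤ Z := zero_le_one.trans hZ
  have h3 : (3 : ℝ) ^ ε ≤ 3 := Real.rpow_le_self_of_one_le (by norm_num) hε1
  have he8 : 3 * ((e : ℝ) + 1) ≤ 8 ^ e := by
    have h := one_add_mul_le_pow (by norm_num : (-2 : ℝ) ≤ 7) e
    have : (1 : ℝ) ≤ e := by exact_mod_cast he
    norm_num at h
    linarith
  calc (e + 1) * (Z + 2) ^ ε ≤ (e + 1) * (3 ^ ε * Z ^ ε) := by
        rw [← Real.mul_rpow (by norm_num) hZ0]
        gcongr
        linarith
    _ ≤ (e + 1) * (3 * Z ^ ε) := by gcongr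
    _ ≤ (q ^ ε) ^ e * Z ^ ε := by
        rw [← mul_assoc, mul_comm _ (3 : ℝ)]
        gcongr
        exact he8.trans (pow_le_pow_left₀ (by norm_num) h8 e)
    _ = (q ^ e * Z) ^ ε := by rw [Real.rpow_pow_comm hq, Real.mul_rpow (by positivity) hZ0]
    _ ≤ (q ^ e * Z + 2) ^ ε := by gcongr; linarith

theorem mul_rpow_le {a x η : ℝ} (ha : 1 ≤ a) (hx : 0 ≤ x) (hη1 : η ≤ 1) :
    (a * x) ^ η ≤ a * x ^ η := by
  rw [Real.mul_rpow (by linarith) hx]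
  gcongr
  exact Real.rpow_le_self_of_one_le ha hη1

theorem exists_eight_le_rpow {η : ℝ} (hη : 0 < η) : ∃ B : ℕ, ∀ x : ℝ, B < x → 8 ≤ x ^ η := by
  refine ⟨⌈(8 : ℝ) ^ η⁻¹⌉₊, fun x hx => ?_⟩
  calc (8 : ℝ) = ((8 : ℝ) ^ η⁻¹) ^ η := (Real.rpow_inv_rpow (by norm_num) hη.ne').symm
    _ ≤ x ^ η := by gcongr; exact (Nat.le_ceil _).trans hx.le

theorem one_le_natLog_floor_add_two (X : ℝ) : (1 : ℝ) ≤ Nat.log 2 ⌊X⌋₊ + 2 := by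
  linarith [(Nat.log 2 ⌊X⌋₊).cast_nonneg (α := ℝ)]

theorem natLog_floor_add_two_le {δ X : ℝ} (hδ : 0 < δ) (hX : 1 ≤ X) :
    (Nat.log 2 ⌊X⌋₊ + 2 : ℝ) ≤ (2 + 1 / (δ * Real.log 2)) * X ^ δ := by
  have hlog2 : 0 < Real.log 2 := Real.log_pos one_lt_two
  have hfloor : (0 : ℝ) < ⌊X⌋₊ := Nat.cast_pos.2 (Nat.floor_pos.2 hX)
  have hL : (Nat.log 2 ⌊X⌋₊ : ℝ) ≤ X ^ δ / δ / Real.log 2 := by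
    calc (Nat.log 2 ⌊X⌋₊ : ℝ) ≤ Real.logb 2 ⌊X⌋₊ := by exact_mod_cast Real.natLog_le_logb _ _
      _ ≤ Real.logb 2 X :=
        Real.logb_le_logb_of_le one_lt_two hfloor (Nat.floor_le (by linarith))
      _ ≤ X ^ δ / δ / Real.log 2 := by
        rw [Real.logb]
        gcongr
        exact Real.log_le_rpow_div (by linarith) hδ
  have h1 : 1 ≤ X ^ δ := Real.one_le_rpow hX hδ.le
  calc (Nat.log 2 ⌊X⌋₊ + 2 : ℝ) ≤ 2 * X ^ δ + X ^ δ / δ / Real.log 2 := by linarith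
    _ = (2 + 1 / (δ * Real.log 2)) * X ^ δ := by field_simp

theorem natLog_floor_add_two_pow_le {η X : ℝ} (hη : 0 < η) (hX : 1 ≤ X) {s K : ℕ}
    (hs : s ≤ K) (hK : 0 < K) :
    (Nat.log 2 ⌊X⌋₊ + 2 : ℝ) ^ s ≤ (2 + K / (η * Real.log 2)) ^ K * X ^ η := by
  have hδ : 0 < η / K := div_pos hη (Nat.cast_pos.2 hK)
  calc (Nat.log 2 ⌊X⌋₊ + 2 : ℝ) ^ s ≤ (Nat.log 2 ⌊X⌋₊ + 2 : ℝ) ^ K :=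
        pow_le_pow_right₀ (one_le_natLog_floor_add_two X) hs
    _ ≤ ((2 + 1 / (η / K * Real.log 2)) * X ^ (η / K)) ^ K :=
        pow_le_pow_left₀ (by positivity) (natLog_floor_add_two_le hδ hX) K
    _ = (2 + K / (η * Real.log 2)) ^ K * X ^ η := by
        rw [mul_pow, ← Real.rpow_natCast (X ^ _), ← Real.rpow_mul (by linarith),
          div_mul_cancel₀ _ (Nat.cast_pos.2 hK).ne', div_mul_eq_mul_div, one_div_div]

noncomputable def boxDivisorsBound (ε : ℝ) (s : ℕ) (X Y : ℝ) : ℝ :=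
  (Nat.log 2 ⌊X⌋₊ + 2 : ℝ) ^ s * (2 * (X * Y + 2) ^ ε)

section boxDivisorsBound

variable {ε : ℝ} {s : ℕ} {X Y : ℝ}

theorem two_le_boxDivisorsBound (hε : 0 ≤ ε) (hX : 0 ≤ X) (hY : 0 ≤ Y) :
    2 ≤ boxDivisorsBound ε s X Y := by
  have := one_le_pow₀ (one_le_natLog_floor_add_two X) (n := s)
  have := Real.one_le_rpow (by nlinarith : 1 ≤ X * Y + 2) hε
  unfold boxDivisorsBound
  nlinarith

theorem boxDivisorsBound_mono (hε : 0 ≤ ε) {s' : ℕ} {X' Y' : ℝ} (hs : s ≤ s') (hX : 0 ≤ X)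
    (hY : 0 ≤ Y) (hXX : X ≤ X') (hYY : Y ≤ Y') :
    boxDivisorsBound ε s X Y ≤ boxDivisorsBound ε s' X' Y' := by
  unfold boxDivisorsBound
  calc _ ≤ (Nat.log 2 ⌊X⌋₊ + 2 : ℝ) ^ s' * (2 * (X * Y + 2) ^ ε) := by
        gcongr
        exact one_le_natLog_floor_add_two X
    _ ≤ _ := by
        have := hX.trans hXX
        gcongr

theorem boxDivisorsBound_succ :
    boxDivisorsBound ε (s + 1) X Y = (Nat.log 2 ⌊X⌋₊ + 2) * boxDivisorsBound ε s X Y := by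
  rw [boxDivisorsBound, boxDivisorsBound, pow_succ]
  ring

theorem add_one_mul_boxDivisorsBound_div_le (hε : 0 < ε) (hε1 : ε ≤ 1) {q : ℝ} (hq : 0 < q)
    (h8 : 8 ≤ q ^ ε) {e : ℕ} (he : 1 ≤ e) (hqe : q ^ e ≤ X * Y) :
    (e + 1) * boxDivisorsBound ε s X (Y / q ^ e) ≤ boxDivisorsBound ε s X Y := by
  have hqZ : q ^ e * (X * (Y / q ^ e)) = X * Y := by field_simp
  have hZ : 1 ≤ X * (Y / q ^ e) := by
    rw [← mul_div_assoc]
    exact (one_le_div (by positivity)).2 hqe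
  have := add_one_mul_rpow_le hε hε1 hq.le h8 he hZ
  rw [hqZ] at this
  unfold boxDivisorsBound
  calc _ = (Nat.log 2 ⌊X⌋₊ + 2 : ℝ) ^ s * (2 * ((e + 1) * (X * (Y / q ^ e) + 2) ^ ε)) := by
        ring
    _ ≤ _ := by gcongr

theorem boxDivisorsBound_two_mul_le {M N : ℝ} (hε : 0 < ε) (hε1 : ε ≤ 1) (hM : 1 ≤ M)
    (hN : 1 ≤ N) {K : ℕ} (hs : s ≤ K) (hK : 0 < K) :
    boxDivisorsBound ε s (2 * M) (2 * N) ≤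
      24 * (2 + K / (ε * Real.log 2)) ^ K * M ^ (2 * ε) * N ^ ε := by
  have hMε : (2 * M) ^ ε ≤ 2 * M ^ ε := mul_rpow_le one_le_two (by linarith) hε1
  have hMNε : (2 * M * (2 * N) + 2) ^ ε ≤ 6 * (M ^ ε * N ^ ε) := by
    rw [← Real.mul_rpow (by linarith) (by linarith)]
    exact (Real.rpow_le_rpow (by positivity) (by nlinarith) hε.le).trans
      (mul_rpow_le (by norm_num) (by nlinarith) hε1)
  calc boxDivisorsBound ε s (2 * M) (2 * N)
      ≤ (2 + K / (ε * Real.log 2)) ^ K * (2 * M ^ ε) * (2 * (6 * (M ^ ε * N ^ ε))) := by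
        rw [boxDivisorsBound]
        gcongr
        exact (natLog_floor_add_two_pow_le hε (by linarith) hs hK).trans (by gcongr)
    _ = _ := by rw [two_mul ε, Real.rpow_add (by linarith)]; ring

end boxDivisorsBound

theorem card_filter_factorization_fst_eq_le_boxDivisorsBound {ε : ℝ} {s p n : ℕ}
    (hp : 1 ≤ p) {α β X Y : ℝ} (hX : 0 ≤ X) (hY : 0 ≤ Y)
    (ih : ∀ α β X Y : ℝ, 0 ≤ X → 0 ≤ Y →
      ((boxDivisors (ordCompl[p] n) α X β Y).card : ℝ) ≤ boxDivisorsBound ε s X Y)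
    {i : ℕ} (hi : i ∈ (boxDivisors n α X β Y).image (·.1.factorization p)) :
    ({d ∈ boxDivisors n α X β Y | d.1.factorization p = i}.card : ℝ) ≤
      boxDivisorsBound ε s X (Y / p ^ n.factorization p) := by
  have hie : i ≤ n.factorization p := by
    obtain ⟨d, hd, rfl⟩ := mem_image.1 hi
    have := factorization_fst_add_snd hd p
    omega
  have hp1 : (1 : ℝ) ≤ p := by exact_mod_cast hp
  refine (Nat.cast_le.2 (card_filter_factorization_fst_eq_le hie)).trans
    ((ih _ _ _ _ (by positivity) (by positivity)).trans ?_)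
  rw [boxDivisorsBound, boxDivisorsBound, div_mul_div_comm, ← pow_add, Nat.add_sub_cancel' hie,
    mul_div_assoc]
  gcongr
  exact div_le_self hX (one_le_pow₀ hp1)

theorem card_boxDivisors_le {ε : ℝ} (hε : 0 < ε) (hε1 : ε ≤ 1) {B : ℕ}
    (hB : ∀ p : ℕ, p.Prime → B < p → 8 ≤ (p : ℝ) ^ ε) {n : ℕ} (hn : n ≠ 0) (α β : ℝ) {X Y : ℝ}
    (hX : 0 ≤ X) (hY : 0 ≤ Y) :
    ((boxDivisors n α X β Y).card : ℝ) ≤ boxDivisorsBound ε (smallPrimeFactors B n).card X Y := by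
  induction n using Nat.strong_induction_on generalizing α β X Y with
  | _ n ih =>
  set S := boxDivisors n α X β Y
  have two_le := two_le_boxDivisorsBound (s := (smallPrimeFactors B n).card) hε.le hX hY
  rcases eq_or_ne n 1 with rfl | hn1
  · exact le_trans (by exact_mod_cast (card_filter_le _ _).trans (by simp)) two_le
  set p := n.minFac
  have hp : p.Prime := Nat.minFac_prime hn1
  set e := n.factorization p
  have he : 1 ≤ e := hp.factorization_pos_of_dvd hn (Nat.minFac_dvd n)
  have hpe : (1 : ℝ) ≤ p ^ e := one_le_pow₀ (by exact_mod_cast hp.one_lt.le)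
  have hn' : ordCompl[p] n < n :=
    Nat.div_lt_self (Nat.pos_of_ne_zero hn) (Nat.one_lt_pow (by omega) hp.one_lt)
  set s' := ((smallPrimeFactors B n).erase p).card
  have hcard : (S.card : ℝ) ≤
      (S.image (·.1.factorization p)).card * boxDivisorsBound ε s' X (Y / p ^ e) := by
    have := card_le_card_image_mul S (·.1.factorization p) fun _ =>
      card_filter_factorization_fst_eq_le_boxDivisorsBound hp.one_lt.le hX hY
        fun α β _ _ hX hY => ih _ hn' (Nat.ordCompl_pos p hn).ne' α β hX hY
    rwa [smallPrimeFactors_ordCompl] at this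
  have hbound : 0 ≤ boxDivisorsBound ε s' X (Y / p ^ e) :=
    (two_le_boxDivisorsBound hε.le hX (by positivity)).trans' zero_le_two
  rcases le_or_gt p B with hpB | hpB
  · have hp_mem : p ∈ smallPrimeFactors B n :=
      mem_filter.2 ⟨Nat.mem_primeFactors.2 ⟨hp, Nat.minFac_dvd n, hn⟩, hpB⟩
    calc (S.card : ℝ) ≤ _ := hcard
      _ ≤ (Nat.log 2 ⌊X⌋₊ + 2) * boxDivisorsBound ε s' X Y := by
        gcongr
        · exact_mod_cast card_image_factorization_fst_le_log hp.two_le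
        · exact boxDivisorsBound_mono hε.le le_rfl hX (by positivity) le_rfl (div_le_self hY hpe)
      _ = _ := by rw [← boxDivisorsBound_succ, card_erase_add_one hp_mem]
  rcases le_or_gt ((p : ℝ) ^ e) (X * Y) with hpXY | hpXY
  · calc (S.card : ℝ) ≤ _ := hcard
      _ ≤ (e + 1) * boxDivisorsBound ε s' X (Y / p ^ e) := by
        gcongr
        exact_mod_cast card_image_factorization_fst_le_factorization_add_one p
      _ ≤ boxDivisorsBound ε s' X Y :=
        add_one_mul_boxDivisorsBound_div_le hε hε1 (by exact_mod_cast hp.pos) (hB p hp hpB) he hpXY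
      _ ≤ _ := boxDivisorsBound_mono hε.le card_erase_le hX hY le_rfl le_rfl
  · exact le_trans (by exact_mod_cast card_boxDivisors_le_two hpXY) two_le

theorem natAbs_mem_Icc {x x₀ : ℤ} {R : ℝ} (h : |(x : ℝ) - x₀| ≤ R) :
    (x.natAbs : ℝ) ∈ Set.Icc (|(x₀ : ℝ)| - R) (|(x₀ : ℝ)| - R + 2 * R) := by
  rw [Nat.cast_natAbs, Int.cast_abs]
  have := abs_le.1 ((abs_abs_sub_abs_le_abs_sub _ _).trans h)
  constructor <;> linarith

theorem ncard_le_two_mul_card_boxDivisors {m : ℤ} (hm : m ≠ 0) (a₀ b₀ : ℤ) (M N : ℝ) :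
    {p : ℤ × ℤ | m = p.1 * p.2 ∧ |(p.1 : ℝ) - a₀| ≤ M ∧ |(p.2 : ℝ) - b₀| ≤ N}.ncard ≤
      2 * (boxDivisors m.natAbs (|(a₀ : ℝ)| - M) (2 * M) (|(b₀ : ℝ)| - N) (2 * N)).card := by
  set D := boxDivisors m.natAbs (|(a₀ : ℝ)| - M) (2 * M) (|(b₀ : ℝ)| - N) (2 * N)
  calc _ ≤ ((univ ×ˢ D : Finset (Bool × ℕ × ℕ)) : Set (Bool × ℕ × ℕ)).ncard := by
        refine Set.ncard_le_ncard_of_injOn (fun q => (decide (0 < q.1), q.1.natAbs, q.2.natAbs))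
          (fun q ⟨hq, h1, h2⟩ => ?_) (fun q ⟨hq, _⟩ q' ⟨hq', _⟩ h => ?_) (Set.toFinite _)
        · refine mem_product.2 ⟨mem_univ _, mem_boxDivisors.2 ⟨⟨?_, ?_⟩, natAbs_mem_Icc h1,
            natAbs_mem_Icc h2⟩⟩
          · rw [hq, Int.natAbs_mul]
          · exact Int.natAbs_ne_zero.2 hm
        · simp only [Prod.mk.injEq, decide_eq_decide] at h
          have h0 : q.1 ≠ 0 := by rintro h0; simp [h0] at hq; exact hm hq
          have h1 : q.1 = q'.1 := by omega
          exact Prod.ext h1 (mul_left_cancel₀ h0 (by rw [← hq, h1, ← hq']))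
    _ = 2 * D.card := by rw [Set.ncard_coe_finset, card_product, card_univ, Fintype.card_bool]

theorem stmt2 (ε : ℝ) (hε : 0 < ε) :
    ∃ C : ℝ, 0 < C ∧ ∀ (m : ℤ), m ≠ 0 → ∀ (a₀ b₀ : ℤ) (M N : ℝ), 1 ≤ M → 1 ≤ N →
      (({p : ℤ × ℤ | m = p.1 * p.2 ∧ |(p.1 : ℝ) - (a₀ : ℝ)| ≤ M ∧
          |(p.2 : ℝ) - (b₀ : ℝ)| ≤ N}).ncard : ℝ) ≤ C * M ^ ε * N ^ ε := by
  obtain ⟨η, hη, hη1, hηε⟩ : ∃ η : ℝ, 0 < η ∧ η ≤ 1 ∧ 2 * η ≤ ε :=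
    ⟨min ε 1 / 2, by positivity, by linarith [min_le_right ε 1], by linarith [min_le_left ε 1]⟩
  obtain ⟨B, hB⟩ := exists_eight_le_rpow hη
  set c := 2 + ((B + 1 : ℕ) : ℝ) / (η * Real.log 2)
  refine ⟨48 * c ^ (B + 1), by positivity, fun m hm a₀ b₀ M N hM hN => ?_⟩
  calc _ ≤ 2 * ((boxDivisors m.natAbs (|(a₀ : ℝ)| - M) (2 * M) (|(b₀ : ℝ)| - N)
          (2 * N)).card : ℝ) := by
        exact_mod_cast ncard_le_two_mul_card_boxDivisors hm a₀ b₀ M N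
    _ ≤ 2 * boxDivisorsBound η (smallPrimeFactors B m.natAbs).card (2 * M) (2 * N) := by
        gcongr
        exact card_boxDivisors_le hη hη1 (fun p _ hp => hB p (by exact_mod_cast hp))
          (Int.natAbs_ne_zero.2 hm) _ _ (by linarith) (by linarith)
    _ ≤ 2 * (24 * c ^ (B + 1) * M ^ (2 * η) * N ^ η) := by
        gcongr
        exact boxDivisorsBound_two_mul_le hη hη1 hM hN (card_smallPrimeFactors_le B _) B.succ_pos
    _ = 48 * c ^ (B + 1) * M ^ (2 * η) * N ^ η := by ring
    _ ≤ 48 * c ^ (B + 1) * M ^ ε * N ^ ε := by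
        gcongr
        linarith
end

section
/- Let d ≥ 1 be an integer, let a₁ ≥ 1, and let C₀ ≥ 1. For N ≥ 2 and m ∈ ℤ^d, define the function f_m(n) = m · n on the domain D_m = { n ∈ ℤ^d : |n| ≤ C₀ N and |m · n| ≤ C₀ N^{a₁} }. Then there exist a₂ ≥ 1 and C' > 0, depending only on d, a₁, and C₀ (in particular independent of N), such that for every N ≥ 2 there is a set J ⊂ ℤ^d with |J| ≤ C' N^{a₂} with the property that for every m ∈ ℤ^d there exists m₀ ∈ J with D_{m₀} = D_m and m₀ · n = m · n for all n ∈ D_m. -/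
/-- Integer dot product on `ℤ^d`. -/
def dotZ {d : ℕ} (m n : Fin d → ℤ) : ℤ := ∑ i, m i * n i

/-- Euclidean norm of a lattice point in `ℤ^d`. -/
noncomputable def enormZ {d : ℕ} (n : Fin d → ℤ) : ℝ := Real.sqrt (∑ i, ((n i : ℝ)) ^ 2)

/-- The domain `D_m = { n ∈ ℤ^d : |n| ≤ C₀ N and |m · n| ≤ C₀ N^{a₁} }`. -/
def Dset {d : ℕ} (C₀ N a₁ : ℝ) (m : Fin d → ℤ) : Set (Fin d → ℤ) :=
  {n | enormZ n ≤ C₀ * N ∧ (|dotZ m n| : ℝ) ≤ C₀ * N ^ a₁}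

/-! For each `m`, pick `d` vectors of `D_m` whose rational span contains `D_m`, and record them
together with the values of `m · ` on them. This signature lies in a box with
`O(N^(d²) · N^(a₁ d))` points. If `m₀` and `m` have the same signature, the functionals `m₀ · `
and `m · ` agree on that span, hence on `D_m` and on `D_{m₀}`; since `D_m` is cut out by a
condition on `|m · n|`, this forces `D_{m₀} = D_m`. One representative per signature suffices. -/

open Submodule Set Fintype

theorem exists_family_mem_span {K V α : Type*} [DivisionRing K] [AddCommGroup V] [Module K V]
    [FiniteDimensional K V] {n : ℕ} (hn : Module.finrank K V ≤ n) (φ : α → V) {D : Set α}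
    (hD : D.Nonempty) :
    ∃ s : Fin n → α, (∀ i, s i ∈ D) ∧ ∀ x ∈ D, φ x ∈ span K (range (φ ∘ s)) := by
  obtain ⟨x₀, hx₀⟩ := hD
  obtain ⟨κ, a, -, hspan, hli⟩ := exists_linearIndependent' K fun x : D => φ x
  have : Fintype κ := @Fintype.ofFinite κ hli.finite
  obtain ⟨e⟩ : Nonempty (κ ↪ Fin n) :=
    Function.Embedding.nonempty_of_card_le (by simpa using hli.fintype_card_le_finrank.trans hn)
  -- extend the independent family `a` to all of `Fin n`, using `x₀` as filler
  let t : Fin n → D := Function.extend e a fun _ => ⟨x₀, hx₀⟩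
  refine ⟨fun i => t i, fun i => (t i).2, fun x hx => ?_⟩
  have hle : span K (range ((fun x : D => φ x) ∘ a)) ≤ span K (range (φ ∘ fun i => (t i : α))) :=
    span_mono <| by
      rintro _ ⟨k, rfl⟩
      exact ⟨e k, by simp [t, e.injective.extend_apply]⟩
  exact hle (hspan ▸ subset_span ⟨⟨x, hx⟩, rfl⟩)

theorem dotProduct_eq_of_mem_span {ι K : Type*} [Fintype ι] [CommSemiring K] {u v : ι → K}
    {S : Set (ι → K)} (h : ∀ y ∈ S, u ⬝ᵥ y = v ⬝ᵥ y) {x : ι → K} (hx : x ∈ span K S) :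
    u ⬝ᵥ x = v ⬝ᵥ x :=
  LinearMap.eqOn_span' (f := dotProductBilin K K u) (g := dotProductBilin K K v) h hx

def ratVec {d : ℕ} (n : Fin d → ℤ) : Fin d → ℚ := fun i => n i

theorem dotZ_eq_of_ratVec_mem_span {d : ℕ} {ι : Type*} {m m' n : Fin d → ℤ} {s : ι → Fin d → ℤ}
    (h : ∀ i, dotZ m (s i) = dotZ m' (s i)) (hn : ratVec n ∈ span ℚ (range (ratVec ∘ s))) :
    dotZ m n = dotZ m' n := by
  have hcast (u w : Fin d → ℤ) : ((dotZ u w : ℤ) : ℚ) = ratVec u ⬝ᵥ ratVec w :=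
    (Int.castRingHom ℚ).map_dotProduct u w
  have := dotProduct_eq_of_mem_span (u := ratVec m) (v := ratVec m') (by
    rintro _ ⟨i, rfl⟩
    simpa only [Function.comp_apply, hcast] using congrArg (Int.cast : ℤ → ℚ) (h i)) hn
  exact_mod_cast (hcast m n).trans (this.trans (hcast m' n).symm)

section Dset

variable {d : ℕ} {C₀ N a₁ : ℝ}

theorem zero_mem_Dset (hC₀ : 0 ≤ C₀) (hN : 0 ≤ N) (m : Fin d → ℤ) : 0 ∈ Dset C₀ N a₁ m := by
  have hNa : 0 ≤ N ^ a₁ := Real.rpow_nonneg hN a₁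
  exact ⟨by simp [enormZ]; positivity, by simp [dotZ]; positivity⟩

theorem abs_apply_le_enormZ (n : Fin d → ℤ) (j : Fin d) : |(n j : ℝ)| ≤ enormZ n := by
  rw [enormZ, ← Real.sqrt_sq_eq_abs]
  exact Real.sqrt_le_sqrt <|
    Finset.single_le_sum (f := fun i => (n i : ℝ) ^ 2) (fun i _ => sq_nonneg _) (Finset.mem_univ j)

theorem Dset_eq_of_dotZ_eq {m m₀ : Fin d → ℤ}
    (h : ∀ n ∈ Dset C₀ N a₁ m, dotZ m₀ n = dotZ m n)
    (h₀ : ∀ n ∈ Dset C₀ N a₁ m₀, dotZ m₀ n = dotZ m n) :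
    Dset C₀ N a₁ m₀ = Dset C₀ N a₁ m := by
  ext n
  constructor
  · exact fun hn => ⟨hn.1, h₀ n hn ▸ hn.2⟩
  · exact fun hn => ⟨hn.1, (h n hn).symm ▸ hn.2⟩

theorem Dset_eq_and_dotZ_eq_of_mem_span {ι : Type*} {m m₀ : Fin d → ℤ} {s : ι → Fin d → ℤ}
    (hs : ∀ n ∈ Dset C₀ N a₁ m, ratVec n ∈ span ℚ (range (ratVec ∘ s)))
    (hs₀ : ∀ n ∈ Dset C₀ N a₁ m₀, ratVec n ∈ span ℚ (range (ratVec ∘ s)))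
    (h : ∀ i, dotZ m₀ (s i) = dotZ m (s i)) :
    Dset C₀ N a₁ m₀ = Dset C₀ N a₁ m ∧ ∀ n ∈ Dset C₀ N a₁ m, dotZ m₀ n = dotZ m n :=
  have agree n (hn : n ∈ Dset C₀ N a₁ m) := dotZ_eq_of_ratVec_mem_span h (hs n hn)
  ⟨Dset_eq_of_dotZ_eq agree fun n hn => dotZ_eq_of_ratVec_mem_span h (hs₀ n hn), agree⟩

end Dset

theorem exists_finset_card_le_forall_exists_eq {α β : Type*} [Nonempty α] (f : α → β)
    {P : Finset β} (hf : ∀ a, f a ∈ P) :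
    ∃ J : Finset α, J.card ≤ P.card ∧ ∀ a, ∃ a₀ ∈ J, f a₀ = f a := by
  classical
  exact ⟨P.image (Function.invFun f), Finset.card_image_le,
    fun a => ⟨_, Finset.mem_image_of_mem _ (hf a), Function.invFun_eq ⟨a, rfl⟩⟩⟩

noncomputable def intBall (R : ℝ) : Finset ℤ := Finset.Icc (-⌊R⌋) ⌊R⌋

theorem mem_intBall {R : ℝ} {k : ℤ} (hk : |(k : ℝ)| ≤ R) : k ∈ intBall R := by
  rw [abs_le] at hk
  have hneg : -k ≤ ⌊R⌋ := Int.le_floor.2 (by push_cast; linarith)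
  exact Finset.mem_Icc.2 ⟨by omega, Int.le_floor.2 hk.2⟩

theorem card_intBall_le {R : ℝ} (hR : 1 ≤ R) : ((intBall R).card : ℝ) ≤ 3 * R := by
  have hfloor : (0 : ℤ) ≤ ⌊R⌋ := Int.floor_nonneg.2 (by linarith)
  rw [intBall, Int.card_Icc, ← Int.cast_natCast, Int.toNat_of_nonneg (by omega)]
  push_cast
  linarith [Int.floor_le R]

theorem card_piFinset_const_le {β : Type*} {t : Finset β} {c : ℝ} (h : (t.card : ℝ) ≤ c)
    (d : ℕ) : ((piFinset fun _ : Fin d => t).card : ℝ) ≤ c ^ d := by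
  rw [card_piFinset_const]
  push_cast
  exact pow_le_pow_left₀ (Nat.cast_nonneg _) h d

noncomputable def signatureBox (d : ℕ) (R T : ℝ) :
    Finset ((Fin d → Fin d → ℤ) × (Fin d → ℤ)) :=
  (piFinset fun _ => piFinset fun _ => intBall R) ×ˢ piFinset fun _ => intBall T

theorem card_signatureBox_le {d : ℕ} {R T : ℝ} (hR : 1 ≤ R) (hT : 1 ≤ T) :
    ((signatureBox d R T).card : ℝ) ≤ (3 * R) ^ (d * d) * (3 * T) ^ d := by
  rw [signatureBox, Finset.card_product, Nat.cast_mul, pow_mul]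
  gcongr
  · exact card_piFinset_const_le (card_piFinset_const_le (card_intBall_le hR) d) d
  · exact card_piFinset_const_le (card_intBall_le hT) d

theorem signature_mem_signatureBox {d : ℕ} {C₀ N a₁ : ℝ} {m : Fin d → ℤ}
    {s : Fin d → Fin d → ℤ} (hs : ∀ i, s i ∈ Dset C₀ N a₁ m) :
    (s, fun i => dotZ m (s i)) ∈ signatureBox d (C₀ * N) (C₀ * N ^ a₁) := by
  simp only [signatureBox, Finset.mem_product, mem_piFinset]
  exact ⟨fun i j => mem_intBall ((abs_apply_le_enormZ _ j).trans (hs i).1),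
    fun i => mem_intBall (by exact_mod_cast (hs i).2)⟩

theorem stmt17 (d : ℕ) (hd : 1 ≤ d) (a₁ C₀ : ℝ) (ha₁ : 1 ≤ a₁) (hC₀ : 1 ≤ C₀) :
    ∃ a₂ : ℝ, 1 ≤ a₂ ∧ ∃ C' : ℝ, 0 < C' ∧ ∀ N : ℝ, 2 ≤ N →
      ∃ J : Finset (Fin d → ℤ), (J.card : ℝ) ≤ C' * N ^ a₂ ∧
        ∀ m : Fin d → ℤ, ∃ m₀ ∈ J,
          Dset C₀ N a₁ m₀ = Dset C₀ N a₁ m ∧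
          ∀ n ∈ Dset C₀ N a₁ m, dotZ m₀ n = dotZ m n := by
  have hd' : (1 : ℝ) ≤ d := by exact_mod_cast hd
  refine ⟨d * d + a₁ * d, by nlinarith, (3 * C₀) ^ (d * d + d), by positivity, fun N hN => ?_⟩
  have hN0 : 0 < N := by linarith
  have hNa : 1 ≤ N ^ a₁ := Real.one_le_rpow (by linarith) (by linarith)
  obtain ⟨s, hsD, hspan⟩ : ∃ s : (Fin d → ℤ) → Fin d → Fin d → ℤ,
      (∀ m i, s m i ∈ Dset C₀ N a₁ m) ∧
      ∀ m, ∀ n ∈ Dset C₀ N a₁ m, ratVec n ∈ span ℚ (range (ratVec ∘ s m)) := by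
    choose s hsD hspan using fun m => exists_family_mem_span (Module.finrank_fin_fun ℚ).le
      ratVec ⟨0, zero_mem_Dset (C₀ := C₀) (a₁ := a₁) (by linarith) hN0.le m⟩
    exact ⟨s, hsD, hspan⟩
  obtain ⟨J, hJ, hrep⟩ := exists_finset_card_le_forall_exists_eq
    (fun m => (s m, fun i => dotZ m (s m i))) fun m => signature_mem_signatureBox (hsD m)
  refine ⟨J, ?_, fun m => ?_⟩
  · calc (J.card : ℝ) ≤ (3 * (C₀ * N)) ^ (d * d) * (3 * (C₀ * N ^ a₁)) ^ d :=
          (Nat.cast_le.2 hJ).trans (card_signatureBox_le (by nlinarith) (by nlinarith))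
      _ = (3 * C₀) ^ (d * d + d) * N ^ ((d : ℝ) * d + a₁ * d) := by
          rw [Real.rpow_add hN0, ← Nat.cast_mul, Real.rpow_natCast, Real.rpow_mul hN0.le,
            Real.rpow_natCast]
          ring
  · obtain ⟨m₀, hm₀, hsig⟩ := hrep m
    obtain ⟨hs, hval⟩ := Prod.mk.inj hsig
    rw [hs] at hval
    exact ⟨m₀, hm₀, Dset_eq_and_dotZ_eq_of_mem_span (hspan m) (hs ▸ hspan m₀) (congrFun hval)⟩
end
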